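/- For p > 2, c_p := ∫_0^1 (1 + s^{(p−2)/p})^{−2p/(p−2)} ds equals 2^{−2p/(p−2)} √π · Γ(x + 1/2)/Γ(x) where x = 1/2 + p/(p−2). -/

import Mathlib

/-!
With `c = p / (p - 2)`, substituting `s = (w / (1 - w)) ^ c` for `w ∈ [0, 1/2]` turns the
integrand into `c w^(c-1) (1-w)^(c-1)`, so `c_p` is `c` times half of the Beta integral
`B(c, c) = Γ(c)² / Γ(2c)`. Legendre's duplication formula then rewrites `Γ(c) / Γ(2c)` as
`2^(1-2c) √π / Γ(c + 1/2)`.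
-/

open Real Set MeasureTheory intervalIntegral

theorem integral_rpow_mul_one_sub_rpow {u v : ℝ} (hu : 0 < u) (hv : 0 < v) :
    ∫ x in (0 : ℝ)..1, x ^ (u - 1) * (1 - x) ^ (v - 1) = Gamma u * Gamma v / Gamma (u + v) := by
  have h := Complex.betaIntegral_eq_Gamma_mul_div u v (by simpa using hu) (by simpa using hv)
  rw [← Complex.ofReal_inj, ← integral_ofReal]
  push_cast [← Complex.Gamma_ofReal]
  rw [← h, Complex.betaIntegral]
  refine integral_congr fun x hx => ?_
  rw [uIcc_of_le zero_le_one] at hx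
  push_cast [Complex.ofReal_cpow hx.1, Complex.ofReal_cpow (sub_nonneg.2 hx.2)]
  rfl

theorem integral_zero_half_of_symm {f : ℝ → ℝ} (hf : IntervalIntegrable f volume 0 1)
    (hsymm : ∀ x, f (1 - x) = f x) :
    ∫ x in (0 : ℝ)..1 / 2, f x = (∫ x in (0 : ℝ)..1, f x) / 2 := by
  have hright : ∫ x in (1 / 2 : ℝ)..1, f x = ∫ x in (0 : ℝ)..1 / 2, f x := by
    have h := integral_comp_sub_left f (1 : ℝ) (a := 0) (b := 1 / 2)
    norm_num [hsymm] at h ⊢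
    exact h.symm
  have hsplit := integral_add_adjacent_intervals (a := 0) (b := 1 / 2) (c := 1)
    (hf.mono_set (by rw [uIcc_of_le, uIcc_of_le] <;> norm_num [Icc_subset_Icc_iff]))
    (hf.mono_set (by rw [uIcc_of_le, uIcc_of_le] <;> norm_num [Icc_subset_Icc_iff]))
  linarith

theorem integral_zero_half_rpow_mul_one_sub_rpow {c : ℝ} (hc : 0 < c) :
    ∫ w in (0 : ℝ)..1 / 2, w ^ (c - 1) * (1 - w) ^ (c - 1)
      = Gamma c * Gamma c / Gamma (2 * c) / 2 := by
  have hbeta := integral_rpow_mul_one_sub_rpow hc hc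
  rw [← two_mul] at hbeta
  -- a non-integrable function has interval integral `0`, while `B(c, c) > 0`
  have hint : IntervalIntegrable (fun w : ℝ => w ^ (c - 1) * (1 - w) ^ (c - 1)) volume 0 1 := by
    refine intervalIntegrable_of_integral_ne_zero ?_
    rw [hbeta]
    have := Gamma_pos_of_pos hc
    exact (div_pos (mul_pos this this) (Gamma_pos_of_pos (by positivity))).ne'
  rw [integral_zero_half_of_symm hint fun w => by rw [sub_sub_cancel, mul_comm], hbeta]

theorem hasDerivAt_div_one_sub_rpow {c w : ℝ} (hc : 1 ≤ c) (hw : w < 1) :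
    HasDerivAt (fun w : ℝ => (w / (1 - w)) ^ c)
      (c * (w / (1 - w)) ^ (c - 1) / (1 - w) ^ 2) w := by
  have hdiv : HasDerivAt (fun w : ℝ => w / (1 - w)) (1 / (1 - w) ^ 2) w :=
    ((hasDerivAt_id' w).div ((hasDerivAt_id' w).const_sub 1) (sub_ne_zero.2 hw.ne')).congr_deriv
      (by ring)
  convert hdiv.rpow_const (Or.inr hc) using 1
  ring

theorem one_add_rpow_inv_rpow_mul_deriv {c w : ℝ} (hc : c ≠ 0) (hw0 : 0 ≤ w) (hw1 : w < 1) :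
    (1 + ((w / (1 - w)) ^ c) ^ c⁻¹) ^ (-(2 * c)) * (c * (w / (1 - w)) ^ (c - 1) / (1 - w) ^ 2)
      = c * (w ^ (c - 1) * (1 - w) ^ (c - 1)) := by
  have h1w : 0 < 1 - w := sub_pos.2 hw1
  have hsum : 1 + w / (1 - w) = (1 - w)⁻¹ := by field_simp; ring
  have hpow : (1 - w) ^ (2 * c) = (1 - w) ^ (c - 1) * (1 - w) ^ (c - 1) * (1 - w) ^ 2 := by
    rw [← rpow_natCast, ← rpow_add h1w, ← rpow_add h1w]
    push_cast
    ring_nf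
  rw [rpow_rpow_inv (div_nonneg hw0 h1w.le) hc, hsum, inv_rpow h1w.le, rpow_neg h1w.le, inv_inv,
    div_rpow hw0 h1w.le, hpow]
  field_simp [(rpow_pos_of_pos h1w (c - 1)).ne']

theorem integral_one_add_rpow_inv_rpow {c : ℝ} (hc : 1 ≤ c) :
    ∫ s in (0 : ℝ)..1, (1 + s ^ c⁻¹) ^ (-(2 * c))
      = c * ∫ w in (0 : ℝ)..1 / 2, w ^ (c - 1) * (1 - w) ^ (c - 1) := by
  have hc0 : 0 < c := by linarith
  have hI : uIcc (0 : ℝ) (1 / 2) = Icc 0 (1 / 2) := uIcc_of_le (by norm_num)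
  have hderiv_cont : ContinuousOn (fun w : ℝ => c * (w / (1 - w)) ^ (c - 1) / (1 - w) ^ 2)
      (uIcc 0 (1 / 2)) := by
    have h1w : ∀ w ∈ uIcc (0 : ℝ) (1 / 2), 1 - w ≠ 0 := fun w hw => by
      rw [hI] at hw; linarith [hw.2]
    refine ContinuousOn.div (continuousOn_const.mul ?_) (by fun_prop)
      fun w hw => pow_ne_zero 2 (h1w w hw)
    exact (continuousOn_id.div (by fun_prop) h1w).rpow_const fun _ _ => Or.inr (by linarith)
  have hg_cont : ContinuousOn (fun s : ℝ => (1 + s ^ c⁻¹) ^ (-(2 * c))) (Ici 0) :=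
    (continuousOn_const.add
      (continuousOn_id.rpow_const fun _ _ => Or.inr (by positivity))).rpow_const
      fun s hs => Or.inl (add_pos_of_pos_of_nonneg one_pos (rpow_nonneg hs _)).ne'
  have hsubst := integral_comp_mul_deriv' (f := fun w : ℝ => (w / (1 - w)) ^ c)
    (fun w hw => hasDerivAt_div_one_sub_rpow hc (by rw [hI] at hw; linarith [hw.2])) hderiv_cont
    (hg_cont.mono <| by
      rintro _ ⟨w, hw, rfl⟩
      rw [hI] at hw
      exact rpow_nonneg (div_nonneg hw.1 (by linarith [hw.2])) c)
  simp only [Function.comp_def] at hsubst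
  norm_num [zero_rpow hc0.ne'] at hsubst
  rw [← hsubst, ← intervalIntegral.integral_const_mul]
  refine integral_congr fun w hw => ?_
  rw [hI] at hw
  exact one_add_rpow_inv_rpow_mul_deriv hc0.ne' hw.1 (by linarith [hw.2])

theorem integral_one_add_rpow_inv_rpow_eq_Gamma {c : ℝ} (hc : 1 ≤ c) :
    ∫ s in (0 : ℝ)..1, (1 + s ^ c⁻¹) ^ (-(2 * c))
      = (2 : ℝ) ^ (-(2 * c)) * √π * Gamma (c + 1) / Gamma (c + 1 / 2) := by
  have hc0 : 0 < c := by linarith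
  have hdup := Gamma_mul_Gamma_add_half c
  rw [show 1 - 2 * c = 1 + -(2 * c) by ring, rpow_add two_pos, rpow_one] at hdup
  rw [integral_one_add_rpow_inv_rpow hc, integral_zero_half_rpow_mul_one_sub_rpow hc0,
    Gamma_add_one hc0.ne', eq_div_iff (Gamma_pos_of_pos (by linarith)).ne',
    show c * (Gamma c * Gamma c / Gamma (2 * c) / 2) * Gamma (c + 1 / 2)
      = c * Gamma c * (Gamma c * Gamma (c + 1 / 2)) / Gamma (2 * c) / 2 by ring, hdup]
  field_simp [(Gamma_pos_of_pos (by linarith : 0 < 2 * c)).ne']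

/-- For `p > 2`, `c_p = ∫_0^1 (1+s^{(p-2)/p})^{-2p/(p-2)} ds
  = 2^{-2p/(p-2)} √π Γ(x+1/2)/Γ(x)` with `x = 1/2 + p/(p-2)`. -/
theorem stmt_7 (p : ℝ) (hp : 2 < p) :
    ∫ s in (0 : ℝ)..1, (1 + s ^ ((p - 2) / p)) ^ (-(2 * p) / (p - 2))
      = (2 : ℝ) ^ (-(2 * p) / (p - 2)) * Real.sqrt π *
        Real.Gamma ((1 / 2 + p / (p - 2)) + 1 / 2) / Real.Gamma (1 / 2 + p / (p - 2)) := by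
  have hp2 : 0 < p - 2 := by linarith
  have hc : 1 ≤ p / (p - 2) := by rw [le_div_iff₀ hp2]; linarith
  rw [← inv_div, neg_div, mul_div_assoc,
    show 1 / 2 + p / (p - 2) + 1 / 2 = p / (p - 2) + 1 by ring, add_comm (1 / 2 : ℝ)]
  exact integral_one_add_rpow_inv_rpow_eq_Gamma hc
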